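/- arXiv:1705.10826 — 4 statements merged into one kernel-verified Lean document; each statement's English description precedes it below -/
import Mathlib

section
/- For every edge-weighted cycle C on n ≥ 3 vertices v_0, …, v_{n−1} with homebase v_0 and invoking cost q ≥ 0, the minimum cost of an exploration strategy equals min_{0 ≤ i ≤ n−1} c_i, where c_i = q + w(C∖e_i) if the edge e_i is incident to v_0, and otherwise c_i = min{ 2q + w(C∖e_i), q + d_{C∖e_i}(v_0, v_i^{min}) + w(C∖e_i) }, where v_i^{min} denotes the endpoint of e_i that is nearer to v_0 in the path C∖e_i. -/
open SimpleGraph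

/-- An exploration strategy on a graph `G` from homebase `h`: a nonempty finite
family of walks, each starting at `h`, that together visit every vertex. -/
structure ExplStrategy {V : Type*} (G : SimpleGraph V) (h : V) where
  k : ℕ
  kpos : 0 < k
  ends : Fin k → V
  walks : (i : Fin k) → G.Walk h (ends i)
  covers : ∀ v : V, ∃ i, v ∈ (walks i).support

/-- The weight of a walk: the sum of the weights of its edges, with multiplicity. -/
def walkWeight {V : Type*} {G : SimpleGraph V} (w : Sym2 V → ℝ) {a b : V}
    (p : G.Walk a b) : ℝ := (p.edges.map w).sum

/-- Cost of a strategy: `k·q` plus the total distance traversed. -/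
noncomputable def stratCost {V : Type*} {G : SimpleGraph V} {h : V}
    (w : Sym2 V → ℝ) (q : ℝ) (S : ExplStrategy G h) : ℝ :=
  (S.k : ℝ) * q + ∑ i, walkWeight w (S.walks i)

/-- Weighted distance between two vertices: infimum of weights of connecting walks. -/
noncomputable def wdist {V : Type*} (G : SimpleGraph V) (w : Sym2 V → ℝ) (u x : V) : ℝ :=
  sInf {c : ℝ | ∃ p : G.Walk u x, walkWeight w p = c}

/-- The ring (cycle graph) on `Fin n`, with edges `e i = s(i, i+1)`. -/
def ringGraph (n : ℕ) [NeZero n] : SimpleGraph (Fin n) :=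
  SimpleGraph.fromRel (fun a b => b = a + 1)

/-- The cost `c_i` associated to omitting the edge `e_i = s(i, i+1)` of the ring:
`q + w(C∖e_i)` if `e_i` is incident to the homebase `v_0`, and otherwise
`min (2q + w(C∖e_i)) (q + d_{C∖e_i}(v_0, v_i^min) + w(C∖e_i))`, where
`d_{C∖e_i}(v_0, v_i^min)` is the distance from `v_0` to the nearer endpoint of `e_i`
in the path `C∖e_i`. -/
noncomputable def ringCost (n : ℕ) [NeZero n] (w : Sym2 (Fin n) → ℝ) (q : ℝ)
    (i : Fin n) : ℝ :=
  let wCi : ℝ := (∑ j : Fin n, w s(j, j + 1)) - w s(i, i + 1)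
  let Ci : SimpleGraph (Fin n) := (ringGraph n).deleteEdges {s(i, i + 1)}
  if i = 0 ∨ i + 1 = 0 then q + wCi
  else min (2 * q + wCi)
    (q + min (wdist Ci w 0 i) (wdist Ci w 0 (i + 1)) + wCi)

/-!
Deleting the edge `e_i` turns the ring into the path `C∖e_i`, running from `v_{i+1}` to `v_i`.
If the walks of a strategy traverse every edge, the strategy costs at least `q + w(C) ≥ c_0`.
Otherwise some `e_i` is traversed by no walk, so all walks live in `C∖e_i` and must reach both of
its ends. Either two different walks do so, costing at least `2q + w(C∖e_i)`, or a single walk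
does, and it must first reach one end and then cross the whole path, costing at least
`q + d_{C∖e_i}(v_0, v_i^min) + w(C∖e_i)`. Both lower bounds are attained by walks along the
path, so `c_i` is the cost of a strategy.
-/

section WalkWeight

variable {V : Type*} {G : SimpleGraph V} (w : Sym2 V → ℝ)

@[simp]
theorem walkWeight_nil {u : V} : walkWeight w (Walk.nil : G.Walk u u) = 0 := rfl

@[simp]
theorem walkWeight_append {u v x : V} (p : G.Walk u v) (p' : G.Walk v x) :
    walkWeight w (p.append p') = walkWeight w p + walkWeight w p' := by
  simp [walkWeight]

@[simp]
theorem walkWeight_concat {u v x : V} (p : G.Walk u v) (h : G.Adj v x) :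
    walkWeight w (p.concat h) = walkWeight w p + w s(v, x) := by
  simp [walkWeight, Walk.edges_concat]

@[simp]
theorem walkWeight_reverse {u v : V} (p : G.Walk u v) :
    walkWeight w p.reverse = walkWeight w p := by
  simp [walkWeight, List.sum_reverse]

@[simp]
theorem walkWeight_transfer {H : SimpleGraph V} {u v : V} (p : G.Walk u v)
    (hp : ∀ e ∈ p.edges, e ∈ H.edgeSet) :
    walkWeight w (p.transfer H hp) = walkWeight w p := by
  simp [walkWeight, Walk.edges_transfer]

theorem walkWeight_nonneg (hw : ∀ e ∈ G.edgeSet, 0 ≤ w e) {u v : V} (p : G.Walk u v) :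
    0 ≤ walkWeight w p :=
  List.sum_nonneg <| by simpa using fun e he => hw e (p.edges_subset_edgeSet he)

theorem walkWeight_takeUntil_add_dropUntil [DecidableEq V] {u v x : V} (p : G.Walk u v)
    (hx : x ∈ p.support) :
    walkWeight w (p.takeUntil x hx) + walkWeight w (p.dropUntil x hx) = walkWeight w p := by
  rw [← walkWeight_append, p.take_spec hx]

theorem sum_le_walkWeight (hw : ∀ e ∈ G.edgeSet, 0 ≤ w e) {u v : V} (p : G.Walk u v)
    {κ : Type*} (s : Finset κ) (e : κ → Sym2 V) (he : Set.InjOn e s)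
    (hs : ∀ j ∈ s, e j ∈ p.edges) : ∑ j ∈ s, w (e j) ≤ walkWeight w p := by
  classical
  have hw' : ∀ e ∈ p.edges, 0 ≤ w e := fun e he => hw e (p.edges_subset_edgeSet he)
  calc ∑ j ∈ s, w (e j) = ∑ x ∈ s.image e, w x := (Finset.sum_image he).symm
    _ ≤ ∑ x ∈ p.edges.toFinset, w x :=
        Finset.sum_le_sum_of_subset_of_nonneg
          (fun x hx => by
            obtain ⟨j, hj, rfl⟩ := Finset.mem_image.1 hx
            exact List.mem_toFinset.2 (hs j hj))
          (fun x hx _ => hw' x (List.mem_toFinset.1 hx))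
    _ ≤ ∑ x ∈ p.edges.toFinset, p.edges.count x • w x := by
        refine Finset.sum_le_sum fun x hx => ?_
        have hx := List.mem_toFinset.1 hx
        rw [nsmul_eq_mul]
        exact le_mul_of_one_le_left (hw' x hx) (by exact_mod_cast List.count_pos_iff.2 hx)
    _ = walkWeight w p := (Finset.sum_list_map_count _ _).symm

theorem sum_le_sum_walkWeight (hw : ∀ e ∈ G.edgeSet, 0 ≤ w e) {ι : Type*} [Fintype ι]
    {u : V} {v : ι → V} (p : ∀ i, G.Walk u (v i)) {κ : Type*} (s : Finset κ)
    (e : κ → Sym2 V) (he : Set.InjOn e s) (f : κ → ι)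
    (hf : ∀ j ∈ s, e j ∈ (p (f j)).edges) :
    ∑ j ∈ s, w (e j) ≤ ∑ i, walkWeight w (p i) := by
  classical
  rw [← Finset.sum_fiberwise_of_maps_to (fun j _ => Finset.mem_univ (f j))]
  refine Finset.sum_le_sum fun i _ => sum_le_walkWeight w hw (p i) _ e
    (he.mono fun j hj => (Finset.mem_filter.1 hj).1) fun j hj => ?_
  obtain ⟨hjs, rfl⟩ := Finset.mem_filter.1 hj
  exact hf j hjs

theorem wdist_comm (u v : V) : wdist G w u v = wdist G w v u := by
  suffices ∀ u v : V, {c | ∃ p : G.Walk u v, walkWeight w p = c} ⊆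
      {c | ∃ p : G.Walk v u, walkWeight w p = c} by
    simp only [wdist, subset_antisymm (this u v) (this v u)]
  rintro u v c ⟨p, rfl⟩
  exact ⟨p.reverse, walkWeight_reverse w p⟩

end WalkWeight

namespace ExplStrategy

variable {V : Type*} {G H : SimpleGraph V} {h : V}

def ofWalk {v : V} (p : G.Walk h v) (hp : ∀ x, x ∈ p.support) : ExplStrategy G h where
  k := 1
  kpos := one_pos
  ends _ := v
  walks _ := p
  covers x := ⟨0, hp x⟩

def ofPair {v v' : V} (p : G.Walk h v) (p' : G.Walk h v')
    (hp : ∀ x, x ∈ p.support ∨ x ∈ p'.support) : ExplStrategy G h where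
  k := 2
  kpos := two_pos
  ends := Fin.cases v fun _ => v'
  walks := Fin.cases p fun _ => p'
  covers x := (hp x).elim (fun hx => ⟨0, by exact hx⟩) fun hx => ⟨1, by exact hx⟩

def ofLE (hGH : G ≤ H) (S : ExplStrategy G h) : ExplStrategy H h where
  k := S.k
  kpos := S.kpos
  ends := S.ends
  walks i := (S.walks i).transfer H fun _ he =>
    edgeSet_mono hGH ((S.walks i).edges_subset_edgeSet he)
  covers x := by simpa [Walk.support_transfer] using S.covers x

end ExplStrategy

section StratCost

variable {V : Type*} {G : SimpleGraph V} {h : V} (w : Sym2 V → ℝ) (q : ℝ)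

@[simp]
theorem stratCost_ofWalk {v : V} (p : G.Walk h v) (hp : ∀ x, x ∈ p.support) :
    stratCost w q (ExplStrategy.ofWalk p hp) = q + walkWeight w p := by
  change (1 : ℕ) * q + ∑ _ : Fin 1, walkWeight w p = _
  simp

@[simp]
theorem stratCost_ofPair {v v' : V} (p : G.Walk h v) (p' : G.Walk h v')
    (hp : ∀ x, x ∈ p.support ∨ x ∈ p'.support) :
    stratCost w q (ExplStrategy.ofPair p p' hp) = 2 * q + (walkWeight w p + walkWeight w p') := by
  change (2 : ℕ) * q + ∑ i : Fin 2, walkWeight w ((ExplStrategy.ofPair p p' hp).walks i) = _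
  rw [Fin.sum_univ_two]
  norm_num
  rfl

@[simp]
theorem stratCost_ofLE {H : SimpleGraph V} (hGH : G ≤ H) (S : ExplStrategy G h) :
    stratCost w q (S.ofLE hGH) = stratCost w q S := by
  simp only [stratCost, ExplStrategy.ofLE, walkWeight_transfer]
  rfl

variable {w q}

theorem add_sum_walkWeight_le_stratCost (hq : 0 ≤ q) (S : ExplStrategy G h) :
    q + ∑ i, walkWeight w (S.walks i) ≤ stratCost w q S := by
  have hk : (1 : ℝ) ≤ S.k := by exact_mod_cast S.kpos
  unfold stratCost
  nlinarith

theorem add_walkWeight_le_stratCost (hq : 0 ≤ q) (hw : ∀ e ∈ G.edgeSet, 0 ≤ w e)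
    (S : ExplStrategy G h) (a : Fin S.k) : q + walkWeight w (S.walks a) ≤ stratCost w q S := by
  refine le_trans ?_ (add_sum_walkWeight_le_stratCost hq S)
  gcongr
  exact Finset.single_le_sum (fun i _ => walkWeight_nonneg w hw (S.walks i)) (Finset.mem_univ a)

theorem two_mul_add_walkWeight_le_stratCost (hq : 0 ≤ q) (hw : ∀ e ∈ G.edgeSet, 0 ≤ w e)
    (S : ExplStrategy G h) {a b : Fin S.k} (hab : a ≠ b) :
    2 * q + (walkWeight w (S.walks a) + walkWeight w (S.walks b)) ≤ stratCost w q S := by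
  have hk : (2 : ℝ) ≤ S.k := by
    have := Fintype.one_lt_card_iff_nontrivial.2 ⟨a, b, hab⟩
    rw [Fintype.card_fin] at this
    exact_mod_cast this
  have hpair :
      walkWeight w (S.walks a) + walkWeight w (S.walks b) ≤ ∑ i, walkWeight w (S.walks i) := by
    rw [← Finset.sum_pair (f := fun i => walkWeight w (S.walks i)) hab]
    exact Finset.sum_le_sum_of_subset_of_nonneg (Finset.subset_univ _)
      fun i _ _ => walkWeight_nonneg w hw (S.walks i)
  unfold stratCost
  nlinarith

end StratCost

namespace ringGraph

open Fin.NatCast Fin.CommRing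

variable {n : ℕ} [NeZero n]

abbrev deleteEdge (n : ℕ) [NeZero n] (i : Fin n) : SimpleGraph (Fin n) :=
  (ringGraph n).deleteEdges {s(i, i + 1)}

/-- The path `deleteEdge n i` visits `i + 1, i + 2, …, i`; `pathVertex i k` is its `k`-th
vertex and `pathPos i` is the inverse numbering. -/
def pathVertex (i : Fin n) (k : ℕ) : Fin n := (k : Fin n) + (i + 1)

def pathPos (i v : Fin n) : ℕ := (v - (i + 1)).val

/-- The weight of the part of the path `deleteEdge n i` between its vertices number `a` and `b`;
`arcWeight w i 0 (n - 1)` is `w(C∖e_i)`. -/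
noncomputable def arcWeight (w : Sym2 (Fin n) → ℝ) (i : Fin n) (a b : ℕ) : ℝ :=
  ∑ k ∈ Finset.Ico a b, w s(pathVertex i k, pathVertex i k + 1)

/-- `d_{C∖e_i}(u, v_i^min)`: the distance from `u` to the nearer end of `deleteEdge n i`. -/
noncomputable def nearEndDist (w : Sym2 (Fin n) → ℝ) (i u : Fin n) : ℝ :=
  min (arcWeight w i (pathPos i u) (n - 1)) (arcWeight w i 0 (pathPos i u))

theorem pathVertex_pathPos (i v : Fin n) : pathVertex i (pathPos i v) = v := by
  simp [pathVertex, pathPos, Fin.cast_val_eq_self]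

theorem pathPos_pathVertex (i : Fin n) {k : ℕ} (hk : k < n) : pathPos i (pathVertex i k) = k := by
  simp [pathVertex, pathPos, Fin.val_natCast, Nat.mod_eq_of_lt hk]

theorem pathPos_lt (i v : Fin n) : pathPos i v < n := (v - (i + 1)).isLt

theorem pathPos_injective (i : Fin n) : Function.Injective (pathPos i) := fun u v h => by
  rw [← pathVertex_pathPos i u, h, pathVertex_pathPos]

theorem pathVertex_succ (i : Fin n) (k : ℕ) : pathVertex i (k + 1) = pathVertex i k + 1 := by
  simp only [pathVertex]
  push_cast
  ring

theorem pathVertex_sub_one (i : Fin n) : pathVertex i (n - 1) = i := by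
  have : ((n - 1 : ℕ) : Fin n) + 1 = 0 := by
    rw [← Nat.cast_add_one, Nat.sub_add_cancel NeZero.one_le, Fin.natCast_self]
  simp only [pathVertex]
  linear_combination this

@[simp]
theorem pathPos_self (i : Fin n) : pathPos i i = n - 1 := by
  nth_rw 2 [← pathVertex_sub_one i]
  exact pathPos_pathVertex i (Nat.sub_lt (Nat.pos_of_neZero n) one_pos)

@[simp]
theorem pathPos_add_one (i : Fin n) : pathPos i (i + 1) = 0 := by simp [pathPos]

theorem pathPos_lt_sub_one {i v : Fin n} (hv : v ≠ i) : pathPos i v < n - 1 := by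
  have := pathPos_lt i v
  have : pathPos i v ≠ pathPos i i := fun h => hv (pathPos_injective i h)
  simp only [pathPos_self] at this
  omega

theorem pathPos_add_one_of_ne {i v : Fin n} (hv : v ≠ i) :
    pathPos i (v + 1) = pathPos i v + 1 := by
  rw [← pathPos_pathVertex i (k := pathPos i v + 1) (by have := pathPos_lt_sub_one hv; omega),
    pathVertex_succ, pathVertex_pathPos]

theorem adj_add_one (hn : 2 ≤ n) (a : Fin n) : (ringGraph n).Adj a (a + 1) := by
  refine (fromRel_adj (fun a b : Fin n => b = a + 1) a (a + 1)).2 ⟨fun h => ?_, Or.inl rfl⟩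
  have : ((1 : ℕ) : Fin n) = 0 := by simpa using h
  have := Nat.le_of_dvd one_pos (Fin.natCast_eq_zero.1 this)
  omega

theorem edge_injective (hn : 3 ≤ n) : Function.Injective fun j : Fin n => s(j, j + 1) := by
  intro a b h
  rcases Sym2.eq_iff.1 h with ⟨hab, -⟩ | ⟨hab, hba⟩
  · exact hab
  · have : ((2 : ℕ) : Fin n) = 0 := by
      push_cast
      linear_combination hba - hab
    have := Nat.le_of_dvd two_pos (Fin.natCast_eq_zero.1 this)
    omega

theorem exists_eq_of_mem_edgeSet {e : Sym2 (Fin n)} (he : e ∈ (ringGraph n).edgeSet) :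
    ∃ j, e = s(j, j + 1) := by
  induction e with
  | _ a b =>
    rcases ((fromRel_adj (fun a b : Fin n => b = a + 1) a b).1 he).2 with rfl | rfl
    · exact ⟨a, rfl⟩
    · exact ⟨b, Sym2.eq_swap⟩

theorem deleteEdge_adj_add_one (hn : 3 ≤ n) {i a : Fin n} (ha : a ≠ i) :
    (deleteEdge n i).Adj a (a + 1) :=
  deleteEdges_adj.2 ⟨adj_add_one (by omega) a,
    fun h => ha (edge_injective hn (Set.mem_singleton_iff.1 h))⟩

theorem deleteEdge_adj_cases {i a b : Fin n} (h : (deleteEdge n i).Adj a b) :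
    (b = a + 1 ∧ a ≠ i) ∨ (a = b + 1 ∧ b ≠ i) := by
  obtain ⟨hab, hne⟩ := deleteEdges_adj.1 h
  rcases ((fromRel_adj (fun a b : Fin n => b = a + 1) a b).1 hab).2 with rfl | rfl
  · exact Or.inl ⟨rfl, by rintro rfl; exact hne rfl⟩
  · exact Or.inr ⟨rfl, by rintro rfl; exact hne Sym2.eq_swap⟩

theorem edge_mem_edges_of_le_of_lt {i u v x : Fin n} (p : (deleteEdge n i).Walk u v)
    (hx : x ∈ p.support) {k : ℕ} (huk : pathPos i u ≤ k) (hkx : k < pathPos i x) :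
    s(pathVertex i k, pathVertex i k + 1) ∈ p.edges := by
  induction p with
  | nil => simp only [Walk.support_nil, List.mem_singleton] at hx; subst hx; omega
  | @cons a b c hab p ih =>
    rw [Walk.support_cons, List.mem_cons] at hx
    rcases hx with rfl | hx
    · omega
    rw [Walk.edges_cons, List.mem_cons]
    rcases deleteEdge_adj_cases hab with ⟨rfl, ha⟩ | ⟨rfl, hb⟩
    · rw [pathPos_add_one_of_ne ha] at ih
      rcases huk.eq_or_lt with hk | hk
      · exact Or.inl (by rw [← hk, pathVertex_pathPos])
      · exact Or.inr (ih hx hk)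
    · rw [pathPos_add_one_of_ne hb] at huk
      exact Or.inr (ih hx (by omega))

theorem edge_mem_edges_of_le_of_lt' {i u v x : Fin n} (p : (deleteEdge n i).Walk u v)
    (hx : x ∈ p.support) {k : ℕ} (hxk : pathPos i x ≤ k) (hku : k < pathPos i u) :
    s(pathVertex i k, pathVertex i k + 1) ∈ p.edges := by
  have := edge_mem_edges_of_le_of_lt (p.takeUntil x hx).reverse (Walk.end_mem_support _) hxk hku
  rw [Walk.edges_reverse, List.mem_reverse] at this
  exact p.edges_takeUntil_subset_edges hx this

variable {w : Sym2 (Fin n) → ℝ}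

theorem weight_nonneg_of_mem_edgeSet (hw : ∀ j : Fin n, 0 ≤ w s(j, j + 1)) :
    ∀ e ∈ (ringGraph n).edgeSet, 0 ≤ w e := fun _ he => by
  obtain ⟨j, rfl⟩ := exists_eq_of_mem_edgeSet he
  exact hw j

theorem weight_nonneg_of_mem_edgeSet_deleteEdge (hw : ∀ j : Fin n, 0 ≤ w s(j, j + 1))
    (i : Fin n) :
    ∀ e ∈ (deleteEdge n i).edgeSet, 0 ≤ w e := fun e he =>
  weight_nonneg_of_mem_edgeSet hw e (edgeSet_mono (deleteEdges_le _) he)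

theorem arcWeight_le_walkWeight (hn : 3 ≤ n) (hw : ∀ j : Fin n, 0 ≤ w s(j, j + 1))
    {i u v : Fin n} (p : (deleteEdge n i).Walk u v) {a b : ℕ} (hb : b ≤ n)
    (hp : ∀ k, a ≤ k → k < b → s(pathVertex i k, pathVertex i k + 1) ∈ p.edges) :
    arcWeight w i a b ≤ walkWeight w p := by
  refine sum_le_walkWeight w (weight_nonneg_of_mem_edgeSet_deleteEdge hw i) p _
    (fun k => s(pathVertex i k, pathVertex i k + 1)) ?_ fun k hk => hp k (Finset.mem_Ico.1 hk).1
    (Finset.mem_Ico.1 hk).2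
  intro k hk l hl hkl
  have hk := (Finset.mem_Ico.1 hk).2
  have hl := (Finset.mem_Ico.1 hl).2
  rw [← pathPos_pathVertex i (k := k) (by omega), ← pathPos_pathVertex i (k := l) (by omega)]
  exact congrArg (pathPos i) (edge_injective hn hkl)

theorem arcWeight_le_walkWeight_of_mem_support (hn : 3 ≤ n)
    (hw : ∀ j : Fin n, 0 ≤ w s(j, j + 1)) {i u v x : Fin n} (p : (deleteEdge n i).Walk u v)
    (hx : x ∈ p.support) : arcWeight w i (pathPos i u) (pathPos i x) ≤ walkWeight w p :=
  arcWeight_le_walkWeight hn hw p (pathPos_lt i x).le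
    fun _ hk hk' => edge_mem_edges_of_le_of_lt p hx hk hk'

theorem arcWeight_le_walkWeight_of_mem_support' (hn : 3 ≤ n)
    (hw : ∀ j : Fin n, 0 ≤ w s(j, j + 1)) {i u v x : Fin n} (p : (deleteEdge n i).Walk u v)
    (hx : x ∈ p.support) : arcWeight w i (pathPos i x) (pathPos i u) ≤ walkWeight w p :=
  arcWeight_le_walkWeight hn hw p (pathPos_lt i u).le
    fun _ hk hk' => edge_mem_edges_of_le_of_lt' p hx hk hk'

theorem exists_walk_pathVertex (hn : 3 ≤ n) (i : Fin n) {a b : ℕ} (hab : a ≤ b) (hb : b < n) :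
    ∃ p : (deleteEdge n i).Walk (pathVertex i a) (pathVertex i b),
      walkWeight w p = arcWeight w i a b ∧
        ∀ k, a ≤ k → k ≤ b → pathVertex i k ∈ p.support := by
  induction b, hab using Nat.le_induction with
  | base => exact ⟨Walk.nil, by simp [arcWeight], fun k hk hk' => by simp [le_antisymm hk' hk]⟩
  | succ b hab ih =>
    obtain ⟨p, hpw, hps⟩ := ih (by omega)
    have hbi : pathVertex i b ≠ i := fun h => by
      have := pathPos_pathVertex i (k := b) (by omega)
      rw [h, pathPos_self] at this
      omega
    have hadj : (deleteEdge n i).Adj (pathVertex i b) (pathVertex i (b + 1)) :=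
      pathVertex_succ i b ▸ deleteEdge_adj_add_one hn hbi
    refine ⟨p.concat hadj, ?_, fun k hk hk' => ?_⟩
    · rw [walkWeight_concat, hpw, arcWeight, arcWeight, Finset.sum_Ico_succ_top hab,
        pathVertex_succ]
    · rw [Walk.support_concat, List.mem_append, List.mem_singleton]
      rcases hk'.lt_or_eq with hk' | rfl
      · exact Or.inl (hps k hk (by omega))
      · exact Or.inr rfl

theorem exists_walk_of_pathPos_le (hn : 3 ≤ n) {i u v : Fin n} (h : pathPos i u ≤ pathPos i v) :
    ∃ p : (deleteEdge n i).Walk u v,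
      walkWeight w p = arcWeight w i (pathPos i u) (pathPos i v) ∧
      ∀ x, pathPos i u ≤ pathPos i x → pathPos i x ≤ pathPos i v → x ∈ p.support := by
  have := exists_walk_pathVertex (w := w) hn i h (pathPos_lt i v)
  rw [pathVertex_pathPos, pathVertex_pathPos] at this
  obtain ⟨p, hpw, hps⟩ := this
  exact ⟨p, hpw, fun x hx hx' => pathVertex_pathPos i x ▸ hps _ hx hx'⟩

theorem arcWeight_nonneg (hw : ∀ j : Fin n, 0 ≤ w s(j, j + 1)) (i : Fin n) (a b : ℕ) :
    0 ≤ arcWeight w i a b :=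
  Finset.sum_nonneg fun _ _ => hw _

@[simp]
theorem arcWeight_self (i : Fin n) (a : ℕ) : arcWeight w i a a = 0 := by simp [arcWeight]

theorem arcWeight_add (i : Fin n) {a b c : ℕ} (hab : a ≤ b) (hbc : b ≤ c) :
    arcWeight w i a b + arcWeight w i b c = arcWeight w i a c :=
  Finset.sum_Ico_consecutive _ hab hbc

theorem sum_edge_weight_eq (i : Fin n) :
    ∑ j : Fin n, w s(j, j + 1) = arcWeight w i 0 (n - 1) + w s(i, i + 1) := by
  have hsum : ∑ j : Fin n, w s(j, j + 1) =
      ∑ k ∈ Finset.range n, w s(pathVertex i k, pathVertex i k + 1) := by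
    rw [← Fin.sum_univ_eq_sum_range (fun k => w s(pathVertex i k, pathVertex i k + 1))]
    exact (Fintype.sum_equiv (Equiv.addRight (i + 1)) _ _
      fun k => by simp [pathVertex, Fin.cast_val_eq_self, add_assoc]).symm
  rw [hsum, Finset.range_eq_Ico, arcWeight,
    ← Finset.sum_Ico_consecutive _ (Nat.zero_le (n - 1)) (Nat.sub_le n 1),
    Nat.Ico_pred_singleton (Nat.pos_of_neZero n), Finset.sum_singleton, pathVertex_sub_one]

theorem wdist_deleteEdge (hn : 3 ≤ n) (hw : ∀ j : Fin n, 0 ≤ w s(j, j + 1)) {i u v : Fin n}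
    (h : pathPos i u ≤ pathPos i v) :
    wdist (deleteEdge n i) w u v = arcWeight w i (pathPos i u) (pathPos i v) := by
  refine IsLeast.csInf_eq ⟨(exists_walk_of_pathPos_le hn h).imp fun p hp => hp.1, ?_⟩
  rintro c ⟨p, rfl⟩
  exact arcWeight_le_walkWeight_of_mem_support hn hw p p.end_mem_support

variable {q : ℝ}

theorem ringCost_eq (hn : 3 ≤ n) (hw : ∀ j : Fin n, 0 ≤ w s(j, j + 1)) (hq : 0 ≤ q)
    (i : Fin n) :
    ringCost n w q i = min (2 * q + arcWeight w i 0 (n - 1))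
      (q + nearEndDist w i 0 + arcWeight w i 0 (n - 1)) := by
  have hwC : (∑ j, w s(j, j + 1)) - w s(i, i + 1) = arcWeight w i 0 (n - 1) := by
    rw [sum_edge_weight_eq i]
    ring
  have h0 : pathPos i 0 ≤ n - 1 := by have := pathPos_lt i 0; omega
  simp only [ringCost, hwC]
  split_ifs with hi
  · -- `v_0` is an end of the path, so the single-walk strategy never has to come back.
    have hmin : nearEndDist w i 0 = 0 := by
      rw [nearEndDist]
      rcases hi with rfl | hi
      · rw [← pathPos_self (0 : Fin n), arcWeight_self]
        exact min_eq_left (arcWeight_nonneg hw _ _ _)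
      · rw [← pathPos_add_one i, hi, arcWeight_self]
        exact min_eq_right (arcWeight_nonneg hw _ _ _)
    rw [hmin, min_eq_right (by linarith)]
    ring
  · rw [wdist_deleteEdge hn hw (by simpa using h0), wdist_comm, wdist_deleteEdge hn hw (by simp),
      pathPos_self, pathPos_add_one, nearEndDist]

theorem exists_stratCost_eq_two_mul_add (hn : 3 ≤ n) (i : Fin n) :
    ∃ S : ExplStrategy (ringGraph n) 0, stratCost w q S = 2 * q + arcWeight w i 0 (n - 1) := by
  have h0 : pathPos i 0 ≤ n - 1 := by have := pathPos_lt i 0; omega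
  obtain ⟨toEnd, hE, hEs⟩ :=
    exists_walk_of_pathPos_le (w := w) hn (show pathPos i 0 ≤ pathPos i i by simpa using h0)
  obtain ⟨fromStart, hS, hSs⟩ :=
    exists_walk_of_pathPos_le (w := w) hn (show pathPos i (i + 1) ≤ pathPos i 0 by simp)
  simp only [pathPos_self, pathPos_add_one, zero_le, true_implies] at hE hEs hS hSs
  let S := ExplStrategy.ofPair toEnd fromStart.reverse fun x =>
    (le_total (pathPos i 0) (pathPos i x)).imp
      (fun hx => hEs x hx (by have := pathPos_lt i x; omega))
      (fun hx => by simpa using hSs x hx)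
  refine ⟨S.ofLE (deleteEdges_le _), ?_⟩
  rw [stratCost_ofLE, stratCost_ofPair, walkWeight_reverse, hE, hS,
    ← arcWeight_add i (Nat.zero_le _) h0]
  ring

theorem exists_stratCost_eq_add_nearEndDist_add (hn : 3 ≤ n) (i : Fin n) :
    ∃ S : ExplStrategy (ringGraph n) 0,
      stratCost w q S = q + nearEndDist w i 0 + arcWeight w i 0 (n - 1) := by
  have h0 : pathPos i 0 ≤ n - 1 := by have := pathPos_lt i 0; omega
  obtain ⟨toEnd, hE, -⟩ :=
    exists_walk_of_pathPos_le (w := w) hn (show pathPos i 0 ≤ pathPos i i by simpa using h0)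
  obtain ⟨fromStart, hS, -⟩ :=
    exists_walk_of_pathPos_le (w := w) hn (show pathPos i (i + 1) ≤ pathPos i 0 by simp)
  obtain ⟨across, hA, hAs⟩ :=
    exists_walk_of_pathPos_le (w := w) hn (show pathPos i (i + 1) ≤ pathPos i i by simp)
  simp only [pathPos_self, pathPos_add_one, zero_le, true_implies] at hE hS hA hAs
  have hall : ∀ x, x ∈ across.support := fun x => hAs x (by have := pathPos_lt i x; omega)
  rcases min_choice (arcWeight w i (pathPos i 0) (n - 1)) (arcWeight w i 0 (pathPos i 0))
    with h | h <;> rw [nearEndDist, h]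
  · refine ⟨(ExplStrategy.ofWalk (toEnd.append across.reverse) fun x => by simp [hall]).ofLE
      (deleteEdges_le _), ?_⟩
    simp [hE, hA, add_assoc]
  · refine ⟨(ExplStrategy.ofWalk (fromStart.reverse.append across) fun x => by simp [hall]).ofLE
      (deleteEdges_le _), ?_⟩
    simp [hS, hA, add_assoc]

theorem exists_stratCost_le_ringCost (hn : 3 ≤ n) (hw : ∀ j : Fin n, 0 ≤ w s(j, j + 1))
    (hq : 0 ≤ q) (i : Fin n) :
    ∃ S : ExplStrategy (ringGraph n) 0, stratCost w q S ≤ ringCost n w q i := by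
  rw [ringCost_eq hn hw hq]
  rcases min_choice (2 * q + arcWeight w i 0 (n - 1))
    (q + nearEndDist w i 0 + arcWeight w i 0 (n - 1)) with h | h <;> rw [h]
  · exact (exists_stratCost_eq_two_mul_add hn i).imp fun _ => le_of_eq
  · exact (exists_stratCost_eq_add_nearEndDist_add hn i).imp fun _ => le_of_eq

/-- A walk of the path `deleteEdge n i` that reaches both ends has to reach one of them first and
then cross the whole path. -/
theorem min_add_arcWeight_le_walkWeight (hn : 3 ≤ n) (hw : ∀ j : Fin n, 0 ≤ w s(j, j + 1))
    {i u v : Fin n} (p : (deleteEdge n i).Walk u v) (hi : i ∈ p.support)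
    (hi' : i + 1 ∈ p.support) :
    nearEndDist w i u + arcWeight w i 0 (n - 1) ≤ walkWeight w p := by
  rw [nearEndDist, ← walkWeight_takeUntil_add_dropUntil w p hi]
  rw [← p.take_spec hi, Walk.mem_support_append_iff] at hi'
  rcases hi' with hi' | hi'
  · set p₁ := p.takeUntil i hi
    have h₁ := arcWeight_le_walkWeight_of_mem_support' hn hw (p₁.takeUntil (i + 1) hi')
      (Walk.end_mem_support _)
    have h₂ := arcWeight_le_walkWeight_of_mem_support hn hw (p₁.dropUntil (i + 1) hi')
      (Walk.end_mem_support _)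
    have h₃ :=
      walkWeight_nonneg w (weight_nonneg_of_mem_edgeSet_deleteEdge hw i) (p.dropUntil i hi)
    rw [← walkWeight_takeUntil_add_dropUntil w p₁ hi']
    simp only [pathPos_self, pathPos_add_one] at h₁ h₂
    linarith [min_le_right (arcWeight w i (pathPos i u) (n - 1)) (arcWeight w i 0 (pathPos i u))]
  · have h₁ := arcWeight_le_walkWeight_of_mem_support hn hw (p.takeUntil i hi)
      (Walk.end_mem_support _)
    have h₂ := arcWeight_le_walkWeight_of_mem_support' hn hw (p.dropUntil i hi) hi'
    simp only [pathPos_self, pathPos_add_one] at h₁ h₂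
    linarith [min_le_left (arcWeight w i (pathPos i u) (n - 1)) (arcWeight w i 0 (pathPos i u))]

theorem ringCost_le_stratCost_of_forall_not_mem (hn : 3 ≤ n)
    (hw : ∀ j : Fin n, 0 ≤ w s(j, j + 1)) (hq : 0 ≤ q) (S : ExplStrategy (ringGraph n) 0)
    {i : Fin n} (hi : ∀ a, s(i, i + 1) ∉ (S.walks a).edges) :
    ringCost n w q i ≤ stratCost w q S := by
  have hw' := weight_nonneg_of_mem_edgeSet hw
  have hsub : ∀ a, ∀ e ∈ (S.walks a).edges, e ∈ (deleteEdge n i).edgeSet := fun a e he => by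
    rw [edgeSet_deleteEdges]
    exact ⟨(S.walks a).edges_subset_edgeSet he, by rintro rfl; exact hi a he⟩
  let p a := (S.walks a).transfer (deleteEdge n i) (hsub a)
  have hpw : ∀ a, walkWeight w (p a) = walkWeight w (S.walks a) := fun a => walkWeight_transfer ..
  have hps : ∀ a x, x ∈ (p a).support ↔ x ∈ (S.walks a).support := by
    simp [p, Walk.support_transfer]
  obtain ⟨a, ha⟩ := S.covers i
  obtain ⟨b, hb⟩ := S.covers (i + 1)
  rw [ringCost_eq hn hw hq i]
  by_cases hab : a = b
  · subst hab
    calc _ ≤ q + (nearEndDist w i 0 + arcWeight w i 0 (n - 1)) := by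
          rw [← add_assoc]
          exact min_le_right _ _
      _ ≤ q + walkWeight w (S.walks a) := by
          rw [← hpw]
          gcongr
          exact min_add_arcWeight_le_walkWeight hn hw _ ((hps a i).2 ha) ((hps a _).2 hb)
      _ ≤ stratCost w q S := add_walkWeight_le_stratCost hq hw' S a
  · have hA := arcWeight_le_walkWeight_of_mem_support hn hw (p a) ((hps a i).2 ha)
    have hB := arcWeight_le_walkWeight_of_mem_support' hn hw (p b) ((hps b _).2 hb)
    have hsplit := arcWeight_add (w := w) i (Nat.zero_le (pathPos i 0))
      (by have := pathPos_lt i 0; omega : pathPos i 0 ≤ n - 1)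
    simp only [pathPos_self, pathPos_add_one, hpw] at hA hB
    calc _ ≤ 2 * q + arcWeight w i 0 (n - 1) := min_le_left _ _
      _ ≤ 2 * q + (walkWeight w (S.walks a) + walkWeight w (S.walks b)) := by linarith
      _ ≤ stratCost w q S := two_mul_add_walkWeight_le_stratCost hq hw' S hab

theorem ringCost_zero_le_stratCost_of_forall_mem (hn : 3 ≤ n)
    (hw : ∀ j : Fin n, 0 ≤ w s(j, j + 1)) (hq : 0 ≤ q) (S : ExplStrategy (ringGraph n) 0)
    (hall : ∀ j : Fin n, ∃ a, s(j, j + 1) ∈ (S.walks a).edges) :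
    ringCost n w q 0 ≤ stratCost w q S := by
  choose f hf using hall
  have := sum_le_sum_walkWeight w (weight_nonneg_of_mem_edgeSet hw) S.walks Finset.univ
    (fun j => s(j, j + 1)) (edge_injective hn).injOn f fun j _ => hf j
  have := add_sum_walkWeight_le_stratCost (w := w) hq S
  simp only [ringCost, true_or, if_true]
  linarith [hw 0]

theorem exists_ringCost_le_stratCost (hn : 3 ≤ n) (hw : ∀ j : Fin n, 0 ≤ w s(j, j + 1))
    (hq : 0 ≤ q) (S : ExplStrategy (ringGraph n) 0) :
    ∃ i, ringCost n w q i ≤ stratCost w q S := by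
  by_cases hall : ∀ j : Fin n, ∃ a, s(j, j + 1) ∈ (S.walks a).edges
  · exact ⟨0, ringCost_zero_le_stratCost_of_forall_mem hn hw hq S hall⟩
  · simp only [not_forall, not_exists] at hall
    obtain ⟨i, hi⟩ := hall
    exact ⟨i, ringCost_le_stratCost_of_forall_not_mem hn hw hq S hi⟩

end ringGraph

/-- The minimum cost of an exploration strategy of an edge-weighted ring on `n ≥ 3`
vertices with homebase `v_0` and invoking cost `q ≥ 0` equals `min_{0 ≤ i ≤ n-1} c_i`. -/
theorem ring_offline_optimal (n : ℕ) [NeZero n] (hn : 3 ≤ n)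
    (w : Sym2 (Fin n) → ℝ) (hw : ∀ i : Fin n, 0 < w s(i, i + 1))
    (q : ℝ) (hq : 0 ≤ q) :
    IsLeast {c : ℝ | ∃ S : ExplStrategy (ringGraph n) 0, stratCost w q S = c}
      (Finset.univ.inf' (Finset.univ_nonempty_iff.mpr ⟨0⟩) (ringCost n w q)) := by
  have hw' : ∀ j : Fin n, 0 ≤ w s(j, j + 1) := fun j => (hw j).le
  set c₀ := Finset.univ.inf' (Finset.univ_nonempty_iff.mpr ⟨0⟩) (ringCost n w q)
  have lower : ∀ S : ExplStrategy (ringGraph n) 0, c₀ ≤ stratCost w q S := fun S => by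
    obtain ⟨i, hi⟩ := ringGraph.exists_ringCost_le_stratCost hn hw' hq S
    exact (Finset.inf'_le _ (Finset.mem_univ i)).trans hi
  obtain ⟨i, -, hi⟩ : ∃ i ∈ Finset.univ, c₀ = ringCost n w q i :=
    Finset.exists_mem_eq_inf' _ _
  obtain ⟨S, hS⟩ := ringGraph.exists_stratCost_le_ringCost hn hw' hq i
  exact ⟨⟨S, le_antisymm (hS.trans hi.ge) (lower S)⟩, fun c ⟨S, hS⟩ => hS ▸ lower S⟩
end

section
/- Let T be a finite edge-weighted tree with at least two vertices, rooted at the homebase r, with invoking cost q ≥ 0, and let S be a cost-optimal exploration strategy for T. Then for every walk W of S and every vertex v ≠ r, the set of positions at which W occupies a vertex of the subtree T_v is a set of consecutive indices; that is, once a walk of a cost-optimal strategy leaves a subtree it never returns to it. -/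
open SimpleGraph

/-- A strategy is cost-optimal if no exploration strategy has strictly smaller cost. -/
def IsOptimal {V : Type*} {G : SimpleGraph V} {h : V} (w : Sym2 V → ℝ) (q : ℝ)
    (S : ExplStrategy G h) : Prop :=
  ∀ S' : ExplStrategy G h, stratCost w q S ≤ stratCost w q S'

/-- `u` belongs to the subtree `T_v` of the tree `G` rooted at `r`:
`v` lies on every (equivalently, in a tree, the unique) path from `r` to `u`. -/
def InSubtree {V : Type*} (G : SimpleGraph V) (r v u : V) : Prop :=
  ∀ p : G.Path r u, v ∈ p.1.support

/-- `x` is a leaf of the tree `G` rooted at `r`: a vertex of degree 1 different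
from the root. -/
def IsTLeaf {V : Type*} (G : SimpleGraph V) (r x : V) : Prop :=
  x ≠ r ∧ ∃! y, G.Adj x y

/-- `u` is a child of `v` in the tree `G` rooted at `r`. -/
def IsTChild {V : Type*} (G : SimpleGraph V) (r v u : V) : Prop :=
  G.Adj v u ∧ InSubtree G r v u

open scoped Classical in
/-- Total edge weight of the graph `G`. -/
noncomputable def totalWeight {V : Type*} [Fintype V] (G : SimpleGraph V)
    (w : Sym2 V → ℝ) : ℝ :=
  ∑ e : Sym2 V, if e ∈ G.edgeSet then w e else 0

/-!
A walk of a cost-optimal strategy never traverses the same dart twice: a walk `A, d, C, d, D`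
could be replaced by `A, C⁻¹, D`, which visits the same vertices and is lighter by twice the
(positive) weight of `d`. In a tree, a walk from the root can enter
the subtree `T_v` only along the dart from the parent of `v` to `v`, so leaving `T_v` and
coming back would use that dart twice.
-/

theorem Nat.exists_not_and_succ_of_le {P : ℕ → Prop} {a b : ℕ} (hab : a ≤ b) (ha : ¬ P a)
    (hb : P b) : ∃ t, a ≤ t ∧ t < b ∧ ¬ P t ∧ P (t + 1) := by
  by_contra! h
  suffices ∀ n, a ≤ n → n ≤ b → ¬ P n from this b hab le_rfl hb
  intro n han
  induction n, han using Nat.le_induction with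
  | base => exact fun _ => ha
  | succ n han ih => exact fun hnb => h n han (by omega) (ih (by omega))

namespace SimpleGraph

variable {V : Type*} {G : SimpleGraph V}

section walkWeight

variable (w : Sym2 V → ℝ)

@[simp]
theorem walkWeight_cons {u v x : V} (h : G.Adj u v) (p : G.Walk v x) :
    walkWeight w (Walk.cons h p) = w s(u, v) + walkWeight w p := by
  simp [walkWeight]

@[simp]
theorem walkWeight_append {u v x : V} (p : G.Walk u v) (p' : G.Walk v x) :
    walkWeight w (p.append p') = walkWeight w p + walkWeight w p' := by
  simp [walkWeight]

@[simp]
theorem walkWeight_reverse {u v : V} (p : G.Walk u v) :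
    walkWeight w p.reverse = walkWeight w p := by
  simp [walkWeight, List.sum_reverse]

end walkWeight

namespace Walk

theorem exists_eq_append_cons_of_mem_darts {x y : V} (W : G.Walk x y) {d : G.Dart}
    (hd : d ∈ W.darts) :
    ∃ (A : G.Walk x d.fst) (B : G.Walk d.snd y), W = A.append (cons d.adj B) := by
  induction W with
  | nil => simp at hd
  | @cons u v y h p ih =>
    rw [darts_cons, List.mem_cons] at hd
    rcases hd with rfl | hd
    · exact ⟨nil, p, rfl⟩
    · obtain ⟨A, B, rfl⟩ := ih hd
      exact ⟨cons h A, B, rfl⟩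

theorem exists_eq_append_cons_append_cons_of_duplicate_darts {x y : V} (W : G.Walk x y)
    {d : G.Dart} (hd : List.Duplicate d W.darts) :
    ∃ (A : G.Walk x d.fst) (C : G.Walk d.snd d.fst) (D : G.Walk d.snd y),
      W = A.append (cons d.adj (C.append (cons d.adj D))) := by
  induction W with
  | nil => simp at hd
  | @cons u v y h p ih =>
    rw [darts_cons, List.duplicate_cons_iff] at hd
    rcases hd with ⟨rfl, hd⟩ | hd
    · obtain ⟨C, D, rfl⟩ := p.exists_eq_append_cons_of_mem_darts hd
      exact ⟨nil, C, D, rfl⟩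
    · obtain ⟨A, C, D, rfl⟩ := ih hd
      exact ⟨cons h A, C, D, rfl⟩

theorem exists_support_subset_walkWeight_lt_of_duplicate_darts {w : Sym2 V → ℝ}
    (hw : ∀ e ∈ G.edgeSet, 0 < w e) {x y : V} (W : G.Walk x y) {d : G.Dart}
    (hd : List.Duplicate d W.darts) :
    ∃ W' : G.Walk x y, W.support ⊆ W'.support ∧ walkWeight w W' < walkWeight w W := by
  obtain ⟨A, C, D, rfl⟩ := W.exists_eq_append_cons_append_cons_of_duplicate_darts hd
  refine ⟨A.append (C.reverse.append D), ?_, ?_⟩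
  · intro z hz
    simp only [mem_support_append_iff, support_cons, List.mem_cons, support_reverse,
      List.mem_reverse] at hz ⊢
    rcases hz with hz | rfl | hz | rfl | hz
    · exact .inl hz
    · exact .inl A.end_mem_support
    · exact .inr (.inl hz)
    · exact .inr (.inl C.end_mem_support)
    · exact .inr (.inr hz)
  · have : 0 < w s(d.fst, d.snd) := hw _ d.adj
    simp only [walkWeight_append, walkWeight_cons, walkWeight_reverse]
    linarith

end Walk

theorem not_inSubtree_root {r v : V} (hv : v ≠ r) : ¬ InSubtree G r v r := fun h =>
  hv (by simpa using h ⟨Walk.nil, Walk.IsPath.nil⟩)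

theorem eq_of_adj_of_not_inSubtree_of_inSubtree {r v x y : V} (hx : ¬ InSubtree G r v x)
    (hy : InSubtree G r v y) (hxy : G.Adj x y) : y = v := by
  classical
  obtain ⟨p, hvp⟩ : ∃ p : G.Path r x, v ∉ p.1.support := by simpa [InSubtree] using hx
  by_cases hyp : y ∈ p.1.support
  · exact absurd (p.1.support_takeUntil_subset_support hyp (hy ⟨_, p.2.takeUntil hyp⟩)) hvp
  · have hv := hy ⟨_, p.2.concat hyp hxy⟩
    rw [Walk.support_concat, List.mem_append, List.mem_singleton] at hv
    exact (hv.resolve_left hvp).symm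

theorem IsTree.eq_of_adj_of_not_inSubtree (hG : G.IsTree) {r v x x' : V}
    (hx : ¬ InSubtree G r v x) (hx' : ¬ InSubtree G r v x') (hxv : G.Adj x v)
    (hx'v : G.Adj x' v) : x = x' := by
  obtain ⟨p, hvp⟩ : ∃ p : G.Path r x, v ∉ p.1.support := by simpa [InSubtree] using hx
  obtain ⟨p', hvp'⟩ : ∃ p : G.Path r x', v ∉ p.1.support := by simpa [InSubtree] using hx'
  have hpath : ∀ {x : V} (p : G.Path r x) (hxv : G.Adj x v), v ∉ p.1.support →
      (Walk.cons hxv.symm p.1.reverse).IsPath := fun p _ hvp =>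
    p.2.reverse.cons (by simpa using hvp)
  have hunique := hG.isAcyclic.subsingleton_path v r
  have := congrArg (fun q : G.Path v r => q.1.getVert 1)
    (Subsingleton.elim (α := G.Path v r) ⟨_, hpath p hxv hvp⟩ ⟨_, hpath p' hx'v hvp'⟩)
  simpa using this

theorem IsTree.dart_eq_of_enters_subtree (hG : G.IsTree) {r v : V} {d d' : G.Dart}
    (hd : ¬ InSubtree G r v d.fst) (hd' : InSubtree G r v d.snd)
    (he : ¬ InSubtree G r v d'.fst) (he' : InSubtree G r v d'.snd) : d = d' := by
  have hv := eq_of_adj_of_not_inSubtree_of_inSubtree hd hd' d.adj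
  have hv' := eq_of_adj_of_not_inSubtree_of_inSubtree he he' d'.adj
  have hfst := hG.eq_of_adj_of_not_inSubtree hd he (hv ▸ d.adj) (hv' ▸ d'.adj)
  exact Dart.ext _ _ (Prod.ext hfst (hv.trans hv'.symm))

theorem Walk.getElem_darts_eq_getD_support {x y : V} (W : G.Walk x y) {t : ℕ}
    (ht : t < W.darts.length) (z : V) :
    W.darts[t].fst = W.support.getD t z ∧ W.darts[t].snd = W.support.getD (t + 1) z := by
  simp only [fst_darts_getElem, snd_darts_getElem, List.getElem_dropLast, List.getElem_tail]
  constructor <;> rw [List.getD_eq_getElem]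

theorem IsTree.inSubtree_getD_support_of_nodup_darts (hG : G.IsTree) {r v y : V} (hv : v ≠ r)
    (W : G.Walk r y) (hW : W.darts.Nodup) {i j m : ℕ} (hij : i ≤ j) (hjm : j ≤ m)
    (hm : m < W.support.length) (hi : InSubtree G r v (W.support.getD i r))
    (hm' : InSubtree G r v (W.support.getD m r)) : InSubtree G r v (W.support.getD j r) := by
  let P n := InSubtree G r v (W.support.getD n r)
  by_contra hj
  have h0 : ¬ InSubtree G r v (W.support.getD 0 r) := by simpa using not_inSubtree_root hv
  obtain ⟨t, -, hti, ht, ht'⟩ := Nat.exists_not_and_succ_of_le (P := P) (Nat.zero_le i) h0 hi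
  obtain ⟨t', hjt', ht'm, hs, hs'⟩ := Nat.exists_not_and_succ_of_le (P := P) hjm hj hm'
  have hlen : W.support.length = W.darts.length + 1 := by simp
  obtain ⟨hfst, hsnd⟩ := W.getElem_darts_eq_getD_support (t := t) (by omega) r
  obtain ⟨hfst', hsnd'⟩ := W.getElem_darts_eq_getD_support (t := t') (by omega) r
  have := hG.dart_eq_of_enters_subtree (by rwa [hfst]) (by rwa [hsnd]) (by rwa [hfst'])
    (by rwa [hsnd'])
  have := hW.getElem_inj_iff.mp this
  omega

namespace ExplStrategy

variable {h : V}

def replaceWalk (S : ExplStrategy G h) (a : Fin S.k) (W : G.Walk h (S.ends a))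
    (hW : (S.walks a).support ⊆ W.support) : ExplStrategy G h where
  k := S.k
  kpos := S.kpos
  ends := S.ends
  walks := Function.update S.walks a W
  covers z := by
    obtain ⟨b, hb⟩ := S.covers z
    by_cases hba : b = a
    · subst hba
      exact ⟨b, by simpa using hW hb⟩
    · exact ⟨b, by simpa [Function.update_of_ne hba] using hb⟩

theorem stratCost_replaceWalk (w : Sym2 V → ℝ) (q : ℝ) (S : ExplStrategy G h) (a : Fin S.k)
    (W : G.Walk h (S.ends a)) (hW : (S.walks a).support ⊆ W.support) :
    stratCost w q (S.replaceWalk a W hW) + walkWeight w (S.walks a) =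
      stratCost w q S + walkWeight w W := by
  have hupdate : (fun b => walkWeight w (Function.update S.walks a W b)) =
      Function.update (fun b => walkWeight w (S.walks b)) a (walkWeight w W) :=
    funext (Function.apply_update (fun _ => walkWeight w) S.walks a W)
  have hcost : stratCost w q (S.replaceWalk a W hW) =
      S.k * q + ∑ b, walkWeight w (Function.update S.walks a W b) := rfl
  rw [hcost, hupdate, stratCost, Finset.sum_update_of_mem (Finset.mem_univ a),
    Finset.sdiff_singleton_eq_erase, ← Finset.add_sum_erase _ _ (Finset.mem_univ a)]
  ring

end ExplStrategy

section IsOptimal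

variable {h : V} {w : Sym2 V → ℝ} {q : ℝ} {S : ExplStrategy G h}

theorem IsOptimal.walkWeight_le (hS : IsOptimal w q S) (a : Fin S.k)
    (W : G.Walk h (S.ends a)) (hW : (S.walks a).support ⊆ W.support) :
    walkWeight w (S.walks a) ≤ walkWeight w W := by
  have := S.stratCost_replaceWalk w q a W hW
  have := hS (S.replaceWalk a W hW)
  linarith

theorem IsOptimal.nodup_darts (hw : ∀ e ∈ G.edgeSet, 0 < w e) (hS : IsOptimal w q S)
    (a : Fin S.k) : (S.walks a).darts.Nodup := by
  rw [List.nodup_iff_forall_not_duplicate]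
  intro d hd
  obtain ⟨W, hsupp, hlt⟩ :=
    (S.walks a).exists_support_subset_walkWeight_lt_of_duplicate_darts hw hd
  exact (hS.walkWeight_le a W hsupp).not_gt hlt

end IsOptimal

end SimpleGraph

theorem walk_never_returns_to_subtree_general {V : Type*}
    (G : SimpleGraph V) (hG : G.IsTree)
    (r : V) (w : Sym2 V → ℝ) (hw : ∀ e ∈ G.edgeSet, 0 < w e)
    (q : ℝ)
    (S : ExplStrategy G r) (hS : IsOptimal w q S)
    (v : V) (hv : v ≠ r) (a : Fin S.k) :
    ∀ i j m : ℕ, i ≤ j → j ≤ m → m < (S.walks a).support.length →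
      InSubtree G r v ((S.walks a).support.getD i r) →
      InSubtree G r v ((S.walks a).support.getD m r) →
      InSubtree G r v ((S.walks a).support.getD j r) := fun _ _ _ hij hjm hm =>
  hG.inSubtree_getD_support_of_nodup_darts hv _ (hS.nodup_darts hw a) hij hjm hm

/-- In every cost-optimal exploration strategy of an edge-weighted tree, for every
walk and every vertex `v ≠ r`, the positions at which the walk occupies a vertex of
the subtree `T_v` are consecutive: once a walk leaves a subtree it never returns. -/
theorem walk_never_returns_to_subtree {V : Type*} [Fintype V]
    (G : SimpleGraph V) (hG : G.IsTree) (hcard : 1 < Fintype.card V)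
    (r : V) (w : Sym2 V → ℝ) (hw : ∀ e ∈ G.edgeSet, 0 < w e)
    (q : ℝ) (hq : 0 ≤ q)
    (S : ExplStrategy G r) (hS : IsOptimal w q S)
    (v : V) (hv : v ≠ r) (a : Fin S.k) :
    ∀ i j m : ℕ, i ≤ j → j ≤ m → m < (S.walks a).support.length →
      InSubtree G r v ((S.walks a).support.getD i r) →
      InSubtree G r v ((S.walks a).support.getD m r) →
      InSubtree G r v ((S.walks a).support.getD j r) :=
  walk_never_returns_to_subtree_general G hG r w hw q S hS v hv a
end

section
/- Let T be a finite edge-weighted tree rooted at the homebase r, with invoking cost q ≥ 0, and let S be a cost-optimal exploration strategy for T. Then no walk of S contains three consecutive vertices x, v, x where v is an internal vertex, i.e., a vertex different from r having exactly one child; in other words, an agent occupying an internal vertex never returns to its previously occupied vertex in its next move. -/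
open SimpleGraph

/-- `v` is an internal vertex of the tree `G` rooted at `r`: different from the
root and with exactly one child. -/
def IsInternal {V : Type*} (G : SimpleGraph V) (r v : V) : Prop :=
  v ≠ r ∧ ∃! u, IsTChild G r v u

/-
An agent at an internal vertex `v` that steps back to the vertex `x` it came from has
traversed the edge `xv` twice for nothing except visiting `v`. Cutting the detour `x, v, x`
down to `x` saves `2 w(xv) > 0`, and `v` stays explored: `v` has a child `u`, some walk still
visits `u`, and every walk from the root to `u` passes through `v`. This contradicts optimality.
-/

namespace SimpleGraph.Walk

variable {V : Type*} {G : SimpleGraph V}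

theorem support_getD_eq_getVert {u v : V} (p : G.Walk u v) (d : V) {n : ℕ}
    (hn : n ≤ p.length) : p.support.getD n d = p.getVert n := by
  rw [List.getD_eq_getElem _ _ (by simp only [length_support]; omega),
    support_getElem_eq_getVert]

theorem exists_bypass_of_getVert_eq {u v : V} (p : G.Walk u v) {i : ℕ}
    (hi : i + 2 ≤ p.length) (h : p.getVert i = p.getVert (i + 2)) :
    ∃ p' : G.Walk u v, (∀ z ∈ p.support, z ≠ p.getVert (i + 1) → z ∈ p'.support) ∧
      p.edges.Perm
        (s(p.getVert i, p.getVert (i + 1)) :: s(p.getVert i, p.getVert (i + 1)) :: p'.edges) := by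
  induction p generalizing i with
  | nil => simp at hi
  | @cons a c b hac q ih =>
    cases i with
    | zero =>
      cases q with
      | nil => simp at hi
      | @cons _ d _ hcd q =>
        obtain rfl : a = d := by simpa using h
        refine ⟨q, ?_, ?_⟩
        · intro z hz hzc
          simp only [support_cons, List.mem_cons, getVert_cons_succ, getVert_zero] at hz hzc
          rcases hz with rfl | rfl | hz
          exacts [q.start_mem_support, absurd rfl hzc, hz]
        · simp [Sym2.eq_swap]
    | succ i =>
      obtain ⟨q', hsupp, hedges⟩ := ih (by simpa using hi) (by simpa using h)
      refine ⟨cons hac q', ?_, ?_⟩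
      · intro z hz hzv
        rcases List.mem_cons.mp hz with rfl | hz
        · exact start_mem_support _
        · exact List.mem_cons_of_mem _ (hsupp z hz hzv)
      · simpa only [edges_cons, getVert_cons_succ] using
          (hedges.cons _).trans ((List.Perm.swap _ _ _).trans ((List.Perm.swap _ _ _).cons _))

end SimpleGraph.Walk

theorem InSubtree.mem_support {V : Type*} {G : SimpleGraph V} {r v u t : V}
    (h : InSubtree G r v u) (p : G.Walk r t) (hu : u ∈ p.support) : v ∈ p.support := by
  classical
  exact p.support_takeUntil_subset_support hu
    ((p.takeUntil u hu).support_toPath_subset_support (h _))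

namespace ExplStrategy

variable {V : Type*} {G : SimpleGraph V} {r : V}

def update (S : ExplStrategy G r) (a : Fin S.k) (p : G.Walk r (S.ends a))
    (hcov : ∀ z, ∃ j, z ∈ (Function.update S.walks a p j).support) : ExplStrategy G r :=
  { S with walks := Function.update S.walks a p, covers := hcov }

theorem stratCost_update (w : Sym2 V → ℝ) (q : ℝ) (S : ExplStrategy G r) (a : Fin S.k)
    (p : G.Walk r (S.ends a)) (hcov) :
    stratCost w q (S.update a p hcov) + walkWeight w (S.walks a) =
      stratCost w q S + walkWeight w p := by
  have hupdate : (fun j => walkWeight w (Function.update S.walks a p j)) =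
      Function.update (fun j => walkWeight w (S.walks j)) a (walkWeight w p) :=
    funext (Function.apply_update (fun j (p : G.Walk r (S.ends j)) => walkWeight w p) _ _ _)
  change (S.k : ℝ) * q + ∑ j, walkWeight w (Function.update S.walks a p j) + _ = _
  rw [stratCost, hupdate, Finset.sum_update_of_mem (Finset.mem_univ a),
    Finset.sdiff_singleton_eq_erase, ← Finset.add_sum_erase _ _ (Finset.mem_univ a)]
  ring

theorem covers_update_of_bypass {S : ExplStrategy G r} {a : Fin S.k} {p : G.Walk r (S.ends a)}
    {v u : V} (huv : u ≠ v) (hsub : InSubtree G r v u)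
    (hp : ∀ z ∈ (S.walks a).support, z ≠ v → z ∈ p.support) :
    ∀ z, ∃ j, z ∈ (Function.update S.walks a p j).support := by
  have hne : ∀ z, z ≠ v → ∃ j, z ∈ (Function.update S.walks a p j).support := by
    intro z hz
    obtain ⟨j, hj⟩ := S.covers z
    by_cases hja : j = a
    · subst hja
      exact ⟨j, by simpa using hp z hj hz⟩
    · exact ⟨j, by rwa [Function.update_of_ne hja]⟩
  intro z
  by_cases hz : z = v
  · obtain ⟨j, hj⟩ := hne u huv
    exact ⟨j, hz ▸ hsub.mem_support _ hj⟩
  · exact hne z hz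

end ExplStrategy

theorem IsOptimal.walkWeight_le {V : Type*} {G : SimpleGraph V} {r : V} {w : Sym2 V → ℝ}
    {q : ℝ} {S : ExplStrategy G r} (hS : IsOptimal w q S) (a : Fin S.k)
    (p : G.Walk r (S.ends a)) (hcov : ∀ z, ∃ j, z ∈ (Function.update S.walks a p j).support) :
    walkWeight w (S.walks a) ≤ walkWeight w p := by
  have := S.stratCost_update w q a p hcov
  linarith [hS (S.update a p hcov)]

theorem no_immediate_return_at_internal_general {V : Type*}
    (G : SimpleGraph V)
    (r : V) (w : Sym2 V → ℝ) (hw : ∀ e ∈ G.edgeSet, 0 < w e)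
    (q : ℝ)
    (S : ExplStrategy G r) (hS : IsOptimal w q S) :
    ∀ (a : Fin S.k) (i : ℕ), i + 2 < (S.walks a).support.length →
      IsInternal G r ((S.walks a).support.getD (i + 1) r) →
      (S.walks a).support.getD i r ≠ (S.walks a).support.getD (i + 2) r := by
  intro a i hi hint hback
  set p := S.walks a
  have hlen : i + 2 ≤ p.length := by rw [p.length_support] at hi; omega
  rw [p.support_getD_eq_getVert r (by omega)] at hint
  rw [p.support_getD_eq_getVert r (by omega), p.support_getD_eq_getVert r hlen] at hback
  obtain ⟨-, u, ⟨hvu, hsub⟩, -⟩ := hint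
  obtain ⟨p', hsupp, hedges⟩ := p.exists_bypass_of_getVert_eq hlen hback
  have hweight : walkWeight w p = 2 * w s(p.getVert i, p.getVert (i + 1)) + walkWeight w p' := by
    simp only [walkWeight, (hedges.map w).sum_eq, List.map_cons, List.sum_cons]
    ring
  have hpos := hw _ (G.mem_edgeSet.mpr (p.adj_getVert_succ (by omega : i < p.length)))
  have hle := hS.walkWeight_le a p' (ExplStrategy.covers_update_of_bypass hvu.ne' hsub hsupp)
  linarith

/-- In a cost-optimal exploration strategy of an edge-weighted tree, no walk contains
three consecutive vertices `x, v, x` with `v` an internal vertex: an agent occupying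
an internal vertex never immediately returns to its previously occupied vertex. -/
theorem no_immediate_return_at_internal {V : Type*} [Fintype V]
    (G : SimpleGraph V) (hG : G.IsTree)
    (r : V) (w : Sym2 V → ℝ) (hw : ∀ e ∈ G.edgeSet, 0 < w e)
    (q : ℝ) (hq : 0 ≤ q)
    (S : ExplStrategy G r) (hS : IsOptimal w q S) :
    ∀ (a : Fin S.k) (i : ℕ), i + 2 < (S.walks a).support.length →
      IsInternal G r ((S.walks a).support.getD (i + 1) r) →
      (S.walks a).support.getD i r ≠ (S.walks a).support.getD (i + 2) r :=
  no_immediate_return_at_internal_general G r w hw q S hS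
end

section
/- Let K_{1,n} be the star with center r and n ≥ 1 leaves, in which every edge has weight l, with homebase r and invoking cost q satisfying 0 ≤ q < l. Then the minimum cost of an exploration strategy of K_{1,n} equals n·(q + l), whereas the minimum cost among exploration strategies using a single walk equals q + (2n − 1)·l. -/
open SimpleGraph

/-- The star `K_{1,n}`: center `none`, leaves `some i` for `i : Fin n`. -/
def starGraph (n : ℕ) : SimpleGraph (Option (Fin n)) :=
  SimpleGraph.fromRel (fun a _ => a = none)

/-! In the star the center lies between any two leaves, so a walk from the center that visits
`d ≥ 1` leaves has length at least `2d - 1`. Charging the invoking cost `q ≤ l` to the missing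
return edge, every walk costs at least `q + l` per leaf it visits, so any strategy costs at least
`n (q + l)`; the `n` single-edge walks attain this. A single walk must visit all `n` leaves, hence
costs at least `q + (2n - 1) l`, attained by sweeping the leaves and stopping at the last one. -/

open Finset

theorem walkWeight_const {V : Type*} {G : SimpleGraph V} (l : ℝ) {a b : V} (p : G.Walk a b) :
    walkWeight (fun _ => l) p = p.length * l := by
  simp [walkWeight, List.map_const', Walk.length_edges, mul_comm]

theorem stratCost_const {V : Type*} {G : SimpleGraph V} {h : V} (l q : ℝ)
    (S : ExplStrategy G h) :
    stratCost (fun _ => l) q S = ∑ i, (q + (S.walks i).length * l) := by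
  simp [stratCost, walkWeight_const, Finset.sum_add_distrib]

namespace StarGraph

variable {n : ℕ}

theorem adj_none_some (j : Fin n) : (_root_.starGraph n).Adj none (some j) := by
  simp [_root_.starGraph]

theorem eq_none_of_adj_some {j : Fin n} {v : Option (Fin n)}
    (h : (_root_.starGraph n).Adj (some j) v) : v = none := by
  simp only [_root_.starGraph, fromRel_adj] at h
  tauto

def leavesVisited {a b : Option (Fin n)} (p : (_root_.starGraph n).Walk a b) : Finset (Fin n) :=
  univ.filter (some · ∈ p.support)

theorem leavesVisited_cons_none {v b : Option (Fin n)} (h : (_root_.starGraph n).Adj none v)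
    (p : (_root_.starGraph n).Walk v b) : leavesVisited (.cons h p) = leavesVisited p := by
  ext; simp [leavesVisited]

theorem leavesVisited_cons_some {j : Fin n} {v b : Option (Fin n)}
    (h : (_root_.starGraph n).Adj (some j) v) (p : (_root_.starGraph n).Walk v b) :
    leavesVisited (.cons h p) = insert j (leavesVisited p) := by
  ext; simp [leavesVisited, eq_comm]

theorem two_mul_card_leavesVisited_le {a b : Option (Fin n)}
    (p : (_root_.starGraph n).Walk a b) :
    2 * #(leavesVisited p) ≤ p.length + if a = none then 1 else 2 := by
  induction p with
  | @nil u => cases u <;> simp [leavesVisited, filter_eq']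
  | @cons u v b h p ih =>
    cases u with
    | none =>
      have : (if v = none then 1 else 2) ≤ 2 := by split_ifs <;> omega
      rw [leavesVisited_cons_none, Walk.length_cons, if_pos rfl]
      omega
    | some j =>
      obtain rfl := eq_none_of_adj_some h
      have := card_insert_le j (leavesVisited p)
      rw [leavesVisited_cons_some, Walk.length_cons, if_neg (Option.some_ne_none j)]
      rw [if_pos rfl] at ih
      omega

theorem two_mul_card_leavesVisited_le_of_center {b : Option (Fin n)}
    (p : (_root_.starGraph n).Walk none b) : 2 * #(leavesVisited p) ≤ p.length + 1 := by
  simpa using two_mul_card_leavesVisited_le p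

theorem card_leavesVisited_mul_le {l q : ℝ} (hq : 0 ≤ q) (hql : q ≤ l) {b : Option (Fin n)}
    (p : (_root_.starGraph n).Walk none b) :
    #(leavesVisited p) * (q + l) ≤ q + p.length * l := by
  have hl : 0 ≤ l := hq.trans hql
  have hlen : 2 * (#(leavesVisited p) : ℝ) ≤ p.length + 1 := by
    exact_mod_cast two_mul_card_leavesVisited_le_of_center p
  rcases Nat.eq_zero_or_pos #(leavesVisited p) with hzero | hpos
  · rw [hzero, Nat.cast_zero, zero_mul]
    positivity
  · have hone : (1 : ℝ) ≤ #(leavesVisited p) := by exact_mod_cast hpos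
    nlinarith [mul_nonneg (sub_nonneg.2 hone) (sub_nonneg.2 hql),
      mul_nonneg (by linarith : (0 : ℝ) ≤ p.length + 1 - 2 * #(leavesVisited p)) hl]

theorem card_le_sum_card_leavesVisited (S : ExplStrategy (_root_.starGraph n) none) :
    n ≤ ∑ i, #(leavesVisited (S.walks i)) :=
  calc n = #(univ : Finset (Fin n)) := by simp
    _ ≤ #(univ.biUnion fun i => leavesVisited (S.walks i)) := card_le_card fun j _ => by
        obtain ⟨i, hi⟩ := S.covers (some j)
        exact mem_biUnion.2 ⟨i, mem_univ _, by simpa [leavesVisited] using hi⟩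
    _ ≤ _ := card_biUnion_le

theorem mul_add_le_stratCost {l q : ℝ} (hq : 0 ≤ q) (hql : q ≤ l)
    (S : ExplStrategy (_root_.starGraph n) none) :
    n * (q + l) ≤ stratCost (fun _ => l) q S := by
  have hcov : (n : ℝ) ≤ ∑ i, (#(leavesVisited (S.walks i)) : ℝ) := by
    exact_mod_cast card_le_sum_card_leavesVisited S
  rw [stratCost_const]
  calc (n : ℝ) * (q + l) ≤ (∑ i, (#(leavesVisited (S.walks i)) : ℝ)) * (q + l) :=
        mul_le_mul_of_nonneg_right hcov (by linarith)
    _ = ∑ i, #(leavesVisited (S.walks i)) * (q + l) := sum_mul ..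
    _ ≤ _ := sum_le_sum fun i _ => card_leavesVisited_mul_le hq hql (S.walks i)

theorem add_two_mul_sub_one_mul_le_stratCost {l q : ℝ} (hl : 0 ≤ l)
    (S : ExplStrategy (_root_.starGraph n) none) (hS : S.k = 1) :
    q + (2 * n - 1) * l ≤ stratCost (fun _ => l) q S := by
  have hcov := card_le_sum_card_leavesVisited S
  obtain ⟨k, _, _, walks, _⟩ := S
  obtain rfl : k = 1 := hS
  simp only [Fin.sum_univ_one] at hcov
  have hlen : (2 * n : ℝ) - 1 ≤ (walks 0).length := by
    have := two_mul_card_leavesVisited_le_of_center (walks 0)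
    have : (2 * n : ℝ) ≤ (walks 0).length + 1 := by exact_mod_cast (by omega : 2 * n ≤ _)
    linarith
  rw [stratCost_const, Fin.sum_univ_one]
  gcongr

def spokes (hn : 0 < n) : ExplStrategy (_root_.starGraph n) none where
  k := n
  kpos := hn
  ends := some
  walks j := .cons (adj_none_some j) .nil
  covers
    | none => ⟨⟨0, hn⟩, by simp⟩
    | some j => ⟨j, by simp⟩

theorem stratCost_spokes (hn : 0 < n) (l q : ℝ) :
    stratCost (fun _ => l) q (spokes hn) = n * (q + l) := by
  simp [stratCost_const, spokes, mul_add]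

def tour : List (Fin n) → (_root_.starGraph n).Walk none none
  | [] => .nil
  | j :: js => .cons (adj_none_some j) (.cons (adj_none_some j).symm (tour js))

theorem length_tour (js : List (Fin n)) : (tour js).length = 2 * js.length := by
  induction js with
  | nil => rfl
  | cons j js ih => simp only [tour, Walk.length_cons, ih, List.length_cons]; ring

theorem mem_support_tour {js : List (Fin n)} {j : Fin n} (h : j ∈ js) :
    some j ∈ (tour js).support := by
  induction js with
  | nil => simp at h
  | cons i js ih =>
    rcases List.mem_cons.1 h with rfl | h
    · simp [tour]
    · simp [tour, ih h]

def sweep (m : ℕ) : ExplStrategy (_root_.starGraph (m + 1)) none where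
  k := 1
  kpos := one_pos
  ends _ := some (Fin.last m)
  walks _ := (tour ((List.finRange m).map Fin.castSucc)).concat (adj_none_some _)
  covers
    | none => ⟨0, by simp⟩
    | some j => ⟨0, by
        rw [Walk.support_concat, List.mem_append, List.mem_singleton, Option.some_inj]
        rcases j.eq_castSucc_or_eq_last with ⟨i, rfl⟩ | rfl
        · exact .inl (mem_support_tour (by simp))
        · exact .inr rfl⟩

theorem stratCost_sweep (m : ℕ) (l q : ℝ) :
    stratCost (fun _ => l) q (sweep m) = q + (2 * m + 1) * l := by
  simp [stratCost_const, sweep, length_tour]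

end StarGraph

/-- For the star `K_{1,n}` (`n ≥ 1`) with all edge weights `l`, homebase at the
center and invoking cost `0 ≤ q < l`, the minimum exploration cost equals
`n·(q + l)`, whereas the minimum cost among single-walk strategies equals
`q + (2n - 1)·l`. -/
theorem star_optimal_cost (n : ℕ) (hn : 1 ≤ n) (l q : ℝ) (hq : 0 ≤ q) (hql : q < l) :
    IsLeast {c : ℝ | ∃ S : ExplStrategy (_root_.starGraph n) none,
        stratCost (fun _ => l) q S = c} ((n : ℝ) * (q + l)) ∧
    IsLeast {c : ℝ | ∃ S : ExplStrategy (_root_.starGraph n) none,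
        S.k = 1 ∧ stratCost (fun _ => l) q S = c} (q + (2 * (n : ℝ) - 1) * l) := by
  obtain ⟨m, rfl⟩ := Nat.exists_eq_add_of_le' hn
  refine ⟨⟨⟨StarGraph.spokes m.succ_pos, StarGraph.stratCost_spokes _ l q⟩, ?_⟩,
    ⟨⟨StarGraph.sweep m, rfl, ?_⟩, ?_⟩⟩
  · rintro _ ⟨S, rfl⟩
    exact StarGraph.mul_add_le_stratCost hq hql.le S
  · rw [StarGraph.stratCost_sweep]
    push_cast
    ring
  · rintro _ ⟨S, hS, rfl⟩
    exact StarGraph.add_two_mul_sub_one_mul_le_stratCost (hq.trans hql.le) S hS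
end
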